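/- Let V be a finite type with |V| = n ≥ 1, E ⊆ V × V an edge relation, w : V × V → ℝ a weight function, and t ∈ V a fixed sink. Define the Bellman–Ford iterates d_k : V → ℝ ∪ {+∞} by d_0(t) = 0, d_0(u) = +∞ for u ≠ t, and d_{k+1}(u) = min(d_k(u), min_{(u,v) ∈ E} (w(u,v) + d_k(v))). If the graph contains no negative-cost cycle, then d_n = d_{n−1}; that is, the Bellman–Ford iteration stabilizes after at most n − 1 iterations. -/

import Mathlib

open scoped Classical

/-- Bellman–Ford iterates toward a sink `t`, valued in the extended reals:
`d 0 t = 0`, `d 0 u = +∞` for `u ≠ t`, and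
`d (k+1) u = min (d k u) (min over edges (u,v) of w(u,v) + d k v)`. -/
noncomputable def bellmanFord (V : Type*) (E : V → V → Prop)
    (w : V × V → ℝ) (t : V) : ℕ → V → EReal
  | 0, u => if u = t then 0 else ⊤
  | (k + 1), u =>
      min (bellmanFord V E w t k u)
        (⨅ (v : V) (_ : E u v), ((w (u, v) : EReal) + bellmanFord V E w t k v))

/-!
`d k u` is either `⊤` or the cost of an actual walk from `u` to `t`, and it is at most the cost
of every walk from `u` to `t` of length at most `k`. A walk of length at least `|V|` repeats a
vertex, and cutting out the closed subwalk between the repetitions does not raise its cost, as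
there are no negative cycles. So the walk realising `d n u` may be replaced by one of length
`< n` and no larger cost, which bounds `d (n - 1) u`.
-/

open Finset

section Walks

variable {V : Type*} (E : V → V → Prop) (w : V × V → ℝ)

/-- A walk of length `k` is given by the first `k + 1` values of a sequence of vertices. -/
def IsWalk (v : ℕ → V) (k : ℕ) : Prop := ∀ i < k, E (v i) (v (i + 1))

def walkCost (v : ℕ → V) (k : ℕ) : ℝ := ∑ i ∈ range k, w (v i, v (i + 1))

def NoNegativeCycle : Prop :=
  ∀ (k : ℕ) (v : ℕ → V), 1 ≤ k → v k = v 0 → IsWalk E v k → 0 ≤ walkCost w v k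

def consWalk (u : V) (v : ℕ → V) : ℕ → V
  | 0 => u
  | i + 1 => v i

variable {E w} {v v' : ℕ → V} {j k : ℕ}

theorem isWalk_succ' : IsWalk E v (k + 1) ↔ E (v 0) (v 1) ∧ IsWalk E (fun i => v (i + 1)) k :=
  Nat.forall_lt_succ_left

theorem walkCost_succ' :
    walkCost w v (k + 1) = w (v 0, v 1) + walkCost w (fun i => v (i + 1)) k := by
  rw [walkCost, sum_range_succ', add_comm]; rfl

theorem isWalk_add :
    IsWalk E v (j + k) ↔ IsWalk E v j ∧ IsWalk E (fun i => v (j + i)) k := by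
  refine ⟨fun h => ⟨fun i hi => h i (by omega), fun i hi => h (j + i) (by omega)⟩, ?_⟩
  rintro ⟨hj, hk⟩ i hi
  rcases Nat.lt_or_ge i j with hij | hij
  · exact hj i hij
  · obtain ⟨i, rfl⟩ := Nat.exists_eq_add_of_le hij
    exact hk i (by omega)

theorem walkCost_add :
    walkCost w v (j + k) = walkCost w v j + walkCost w (fun i => v (j + i)) k :=
  sum_range_add _ _ _

theorem isWalk_congr (h : ∀ i ≤ k, v i = v' i) : IsWalk E v k ↔ IsWalk E v' k := by
  unfold IsWalk
  refine forall₂_congr fun i hi => ?_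
  rw [h i hi.le, h (i + 1) hi]

theorem walkCost_congr (h : ∀ i ≤ k, v i = v' i) : walkCost w v k = walkCost w v' k := by
  refine sum_congr rfl fun i hi => ?_
  rw [mem_range] at hi
  rw [h i hi.le, h (i + 1) hi]

/-- Cutting the closed subwalk `v a, …, v b` out of a walk of length `k`. -/
theorem exists_walk_lt_of_eq (hneg : NoNegativeCycle E w) (hv : IsWalk E v k)
    {a b : ℕ} (hab : a < b) (hbk : b ≤ k) (hvab : v a = v b) :
    ∃ j < k, ∃ v', IsWalk E v' j ∧ v' 0 = v 0 ∧ v' j = v k ∧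
      walkCost w v' j ≤ walkCost w v k := by
  obtain ⟨c, rfl⟩ := Nat.exists_eq_add_of_le hab.le
  obtain ⟨m, rfl⟩ := Nat.exists_eq_add_of_le hbk
  set v' : ℕ → V := fun i => if i ≤ a then v i else v (c + i)
  have hv'_init : ∀ i ≤ a, v' i = v i := fun i hi => if_pos hi
  have hv'_tail : (fun i => v' (a + i)) = fun i => v (a + c + i) := by
    funext i
    rcases i with _ | i
    · simp [v', hvab]
    · simp only [v', show ¬a + (i + 1) ≤ a by omega, if_false]
      congr 1; omega
  rw [isWalk_add, isWalk_add] at hv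
  have hcycle : 0 ≤ walkCost w (fun i => v (a + i)) c :=
    hneg _ _ (by omega) (by simpa using hvab.symm) hv.1.2
  refine ⟨a + m, by omega, v', ?_, hv'_init 0 (Nat.zero_le a), ?_, ?_⟩
  · rw [isWalk_add, isWalk_congr hv'_init, hv'_tail]
    exact ⟨hv.1.1, hv.2⟩
  · exact congrFun hv'_tail m
  · rw [walkCost_add, walkCost_add, walkCost_add, walkCost_congr hv'_init, hv'_tail]
    linarith

theorem exists_lt_le_eq_of_card_le [Fintype V] (v : ℕ → V) (hk : Fintype.card V ≤ k) :
    ∃ a b, a < b ∧ b ≤ k ∧ v a = v b := by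
  obtain ⟨x, y, hxy, hvxy⟩ :=
    Fintype.exists_ne_map_eq_of_card_lt (fun i : Fin (k + 1) => v i) (by simpa using hk)
  rcases lt_or_gt_of_ne hxy with h | h
  · exact ⟨x, y, h, Nat.lt_succ_iff.mp y.isLt, hvxy⟩
  · exact ⟨y, x, h, Nat.lt_succ_iff.mp x.isLt, hvxy.symm⟩

theorem exists_walk_lt_card [Fintype V] (hneg : NoNegativeCycle E w) (hv : IsWalk E v k) :
    ∃ j < Fintype.card V, ∃ v', IsWalk E v' j ∧ v' 0 = v 0 ∧ v' j = v k ∧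
      walkCost w v' j ≤ walkCost w v k := by
  induction k using Nat.strong_induction_on generalizing v with
  | _ k ih =>
    rcases Nat.lt_or_ge k (Fintype.card V) with hk | hk
    · exact ⟨k, hk, v, hv, rfl, rfl, le_rfl⟩
    obtain ⟨a, b, hab, hbk, hvab⟩ := exists_lt_le_eq_of_card_le v hk
    obtain ⟨j, hjk, v', hv', h0, hj, hcost⟩ := exists_walk_lt_of_eq hneg hv hab hbk hvab
    obtain ⟨i, hi, v'', hv'', h0', hi', hcost'⟩ := ih j hjk hv'
    exact ⟨i, hi, v'', hv'', h0'.trans h0, hi'.trans hj, hcost'.trans hcost⟩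

end Walks

section BellmanFord

variable {V : Type*} {E : V → V → Prop} {w : V × V → ℝ} {t : V}

theorem bellmanFord_succ_le_add {k : ℕ} {u x : V} (hux : E u x) :
    bellmanFord V E w t (k + 1) u ≤ w (u, x) + bellmanFord V E w t k x := by
  rw [bellmanFord]
  exact min_le_of_right_le (iInf₂_le x hux)

theorem bellmanFord_antitone : Antitone (bellmanFord V E w t) :=
  antitone_nat_of_succ_le fun k u => by
    rw [bellmanFord]
    exact min_le_left _ _

theorem bellmanFord_le_walkCost {v : ℕ → V} {k : ℕ} (hv : IsWalk E v k) (hvk : v k = t) :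
    bellmanFord V E w t k (v 0) ≤ walkCost w v k := by
  induction k generalizing v with
  | zero => simp [bellmanFord, ← hvk, walkCost]
  | succ k ih =>
    rw [isWalk_succ'] at hv
    calc bellmanFord V E w t (k + 1) (v 0)
        ≤ w (v 0, v 1) + bellmanFord V E w t k (v 1) := bellmanFord_succ_le_add hv.1
      _ ≤ w (v 0, v 1) + (walkCost w (fun i => v (i + 1)) k : EReal) := by
        gcongr
        exact ih hv.2 hvk
      _ = walkCost w v (k + 1) := by rw [walkCost_succ', EReal.coe_add]

/-- Over finitely many out-neighbours the infimum is attained, or empty and hence `⊤`. -/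
theorem bellmanFord_succ_eq_or [Finite V] (k : ℕ) (u : V) :
    bellmanFord V E w t (k + 1) u = bellmanFord V E w t k u ∨
      ∃ x, E u x ∧ bellmanFord V E w t (k + 1) u = w (u, x) + bellmanFord V E w t k x := by
  set f : V → EReal := fun x => if E u x then w (u, x) + bellmanFord V E w t k x else ⊤
  have hf : (⨅ (x : V) (_ : E u x), (w (u, x) : EReal) + bellmanFord V E w t k x) = ⨅ x, f x := by
    simp only [f, iInf_eq_if]
  have : Nonempty V := ⟨u⟩
  obtain ⟨x, hx⟩ := exists_eq_ciInf_of_finite (f := f)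
  rw [bellmanFord, hf, ← hx]
  by_cases hux : E u x
  · rcases min_choice (bellmanFord V E w t k u) (f x) with h | h
    · exact Or.inl h
    · exact Or.inr ⟨x, hux, by simpa [f, hux] using h⟩
  · left
    simp [f, hux]

theorem bellmanFord_eq_top_or_eq_walkCost [Finite V] (k : ℕ) (u : V) :
    bellmanFord V E w t k u = ⊤ ∨ ∃ j, ∃ v : ℕ → V, IsWalk E v j ∧ v 0 = u ∧ v j = t ∧
      bellmanFord V E w t k u = walkCost w v j := by
  induction k generalizing u with
  | zero =>
    by_cases hut : u = t
    · exact Or.inr ⟨0, fun _ => u, fun i hi => absurd hi (Nat.not_lt_zero i), rfl, hut,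
        by simp [bellmanFord, hut, walkCost]⟩
    · exact Or.inl (by simp [bellmanFord, hut])
  | succ k ih =>
    rcases bellmanFord_succ_eq_or k u with h | ⟨x, hux, h⟩
    · rw [h]; exact ih u
    rcases ih x with hx | ⟨j, v, hv, hv0, hvj, hx⟩
    · left; rw [h, hx, EReal.coe_add_top]
    · refine Or.inr ⟨j + 1, consWalk u v, ?_, rfl, hvj, ?_⟩
      · exact isWalk_succ'.mpr ⟨show E u (v 0) from hv0 ▸ hux, hv⟩
      · rw [h, hx, walkCost_succ', EReal.coe_add]
        simp [consWalk, hv0]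

end BellmanFord

theorem bellmanFord_stabilizes_general
    (V : Type*) [Fintype V] (E : V → V → Prop) (w : V × V → ℝ) (t : V)
    (n : ℕ) (hn : n = Fintype.card V)
    (hnoneg : ∀ (k : ℕ) (v : ℕ → V), 1 ≤ k → v k = v 0 →
      (∀ i < k, E (v i) (v (i + 1))) →
      0 ≤ ∑ i ∈ Finset.range k, w (v i, v (i + 1))) :
    bellmanFord V E w t n = bellmanFord V E w t (n - 1) := by
  refine le_antisymm (bellmanFord_antitone (Nat.sub_le n 1)) fun u => ?_
  rcases bellmanFord_eq_top_or_eq_walkCost n u with h | ⟨k, v, hv, rfl, hvk, h⟩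
  · exact h ▸ le_top
  obtain ⟨j, hj, v', hv', h0, hvj, hcost⟩ := exists_walk_lt_card hnoneg hv
  calc bellmanFord V E w t (n - 1) (v 0)
      ≤ bellmanFord V E w t j (v' 0) := h0 ▸ bellmanFord_antitone (by omega) _
    _ ≤ walkCost w v' j := bellmanFord_le_walkCost hv' (hvj.trans hvk)
    _ ≤ walkCost w v k := EReal.coe_le_coe hcost
    _ = bellmanFord V E w t n (v 0) := h.symm

/-- If the graph has no negative-cost cycle and `n = |V| ≥ 1`, then the
Bellman–Ford iteration stabilizes after at most `n - 1` iterations: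
`d n = d (n-1)`. -/
theorem bellmanFord_stabilizes
    (V : Type*) [Fintype V] (E : V → V → Prop) (w : V × V → ℝ) (t : V)
    (n : ℕ) (hn : n = Fintype.card V) (hn1 : 1 ≤ n)
    (hnoneg : ∀ (k : ℕ) (v : ℕ → V), 1 ≤ k → v k = v 0 →
      (∀ i < k, E (v i) (v (i + 1))) →
      0 ≤ ∑ i ∈ Finset.range k, w (v i, v (i + 1))) :
    bellmanFord V E w t n = bellmanFord V E w t (n - 1) :=
  bellmanFord_stabilizes_general V E w t n hn hnoneg
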